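/- In the sparse sign-consistent JL construction with per-column uniform supports (and n ≥ 2), let p be an integer with 1 ≤ p < s. Then there exist universal constants c₁, c₂ > 0 such that c₁·‖X‖_p ≤ ‖Q_{1,2}‖_p ≤ c₂·‖X‖_p, where X is a random variable with the binomial distribution Bin(s, s/m). -/

import Mathlib

open MeasureTheory ProbabilityTheory Finset Real

/-- The `p`-th moment norm `(E|Y|^p)^(1/p)` of a real random variable. -/
noncomputable def pnorm {Ω : Type*} [MeasureSpace Ω] (Y : Ω → ℝ) (p : ℝ) : ℝ :=
  (∫ ω, |Y ω| ^ p) ^ (1 / p)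

/-- The hash variables `η` of the sparse, sign-consistent JL construction with per-column
uniform supports: independently for each column, the set of rows where the column equals `1`
is a uniformly random `s`-element subset of the `m` rows. -/
structure UnifSSCJL (Ω : Type) [MeasureSpace Ω] (n m s : ℕ) where
  η : Fin m → Fin n → Ω → ℝ
  meas_eta : ∀ r i, Measurable (η r i)
  eta01 : ∀ r i ω, η r i ω = 0 ∨ η r i ω = 1
  cols_indep : iIndepFun (fun i ω => fun r => η r i ω) ℙ
  unif : ∀ (i : Fin n) (S : Finset (Fin m)), S.card = s →
    ℙ {ω | ∀ r, η r i ω = 1 ↔ r ∈ S} = (Nat.choose m s : ENNReal)⁻¹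

/-- `Q i j` is the number of collisions between the nonzero entries of columns `i` and `j`. -/
noncomputable def UnifSSCJL.Q {Ω : Type} [MeasureSpace Ω] {n m s : ℕ} (c : UnifSSCJL Ω n m s)
    (i j : Fin n) (ω : Ω) : ℝ :=
  ∑ r, c.η r i ω * c.η r j ω

/-- `X` has the binomial distribution `Bin(N, α)` (as a real-valued random variable). -/
def HasBinomialDist {Ω : Type*} [MeasureSpace Ω] (X : Ω → ℝ) (N : ℕ) (α : ℝ) : Prop :=
  ∀ k : ℕ, ℙ {ω | X ω = (k : ℝ)} =
    ENNReal.ofReal ((N.choose k : ℝ) * α ^ k * (1 - α) ^ (N - k))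

/-!
Expanding `Q^p = (∑ᵣ η_{r,1} η_{r,2})^p` over maps `f : [p] → [m]` and using the independence
of the two columns gives `E Q^p = ∑_f P(im f ⊆ support)^2`. A uniform `s`-subset of `[m]`
contains a fixed `k`-set with probability `(s)_k / (m)_k`, and `S(p,k) (m)_k` maps have an image
of size `k`, so `E Q^p = ∑_k S(p,k) (s)_k² / (m)_k`. Writing `k^p = ∑_j S(p,j) (k)_j`, the
binomial moments are `E X^p = ∑_k S(p,k) (s)_k α^k` with `α = s/m`. Termwise,
`e^{-k} (s)_k α^k ≤ (s)_k² / (m)_k ≤ (s)_k α^k`, because `(s)_k m^k ≤ s^k (m)_k ≤ s^k m^k`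
and `s^k ≤ e^k (s)_k`. Hence `e^{-p} E X^p ≤ E Q^p ≤ E X^p`: one can take `c₁ = e⁻¹`, `c₂ = 1`.
-/

theorem sum_range_stirlingSecond_succ {R : Type*} [CommSemiring R] (p : ℕ) (a : ℕ → R) :
    ∑ j ∈ range (p + 1 + 1), ((p + 1).stirlingSecond j : R) * a j =
      ∑ j ∈ range (p + 1), (p.stirlingSecond j : R) * (j * a j + a (j + 1)) := by
  have hshift : ∑ j ∈ range (p + 1), (p.stirlingSecond j : R) * (j * a j) =
      ∑ j ∈ range (p + 1), ((j + 1) * p.stirlingSecond (j + 1) : R) * a (j + 1) := by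
    rw [sum_range_succ' _ p, sum_range_succ _ p, Nat.stirlingSecond_eq_zero_of_lt (lt_add_one p)]
    simp only [Nat.cast_zero, zero_mul, mul_zero, add_zero]
    exact sum_congr rfl fun j _ ↦ by push_cast; ring
  rw [sum_range_succ', Nat.stirlingSecond_succ_zero]
  simp only [mul_add, sum_add_distrib, hshift, Nat.stirlingSecond_succ_succ]
  push_cast
  simp only [add_mul, sum_add_distrib, zero_mul, add_zero]

theorem Fin.image_cons_univ {α : Type*} [DecidableEq α] {p : ℕ} (a : α) (f : Fin p → α) :
    univ.image (Fin.cons a f : Fin (p + 1) → α) = insert a (univ.image f) := by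
  ext b
  simp [Fin.exists_fin_succ, eq_comm]

theorem sum_card_insert {α R : Type*} [Fintype α] [DecidableEq α] [CommSemiring R]
    (g : ℕ → R) (T : Finset α) :
    ∑ a, g #(insert a T) = #T * g #T + (Fintype.card α - #T : ℕ) * g (#T + 1) := by
  have hin : ∀ a ∈ T, g #(insert a T) = g #T := fun a ha ↦ by rw [insert_eq_of_mem ha]
  have hout : ∀ a ∈ Tᶜ, g #(insert a T) = g (#T + 1) := fun a ha ↦ by
    rw [card_insert_of_notMem (mem_compl.1 ha)]
  rw [← sum_add_sum_compl T, sum_congr rfl hin, sum_congr rfl hout, sum_const, sum_const,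
    card_compl, nsmul_eq_mul, nsmul_eq_mul]

theorem sum_fun_card_image {α R : Type*} [Fintype α] [DecidableEq α] [CommSemiring R]
    (p : ℕ) (g : ℕ → R) :
    ∑ f : Fin p → α, g #(univ.image f) =
      ∑ j ∈ range (p + 1), (p.stirlingSecond j * (Fintype.card α).descFactorial j : R) * g j := by
  induction p generalizing g with
  | zero => simp
  | succ p ih =>
    rw [← (Fin.consEquiv fun _ ↦ α).sum_comp, Fintype.sum_prod_type, sum_comm]
    simp only [Fin.consEquiv, Equiv.coe_fn_mk, Fin.image_cons_univ, sum_card_insert]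
    rw [ih fun k ↦ k * g k + (Fintype.card α - k : ℕ) * g (k + 1)]
    simp only [mul_assoc]
    rw [sum_range_stirlingSecond_succ p fun j ↦ ((Fintype.card α).descFactorial j : R) * g j]
    refine sum_congr rfl fun j _ ↦ ?_
    rw [Nat.descFactorial_succ]
    push_cast
    ring

theorem Nat.pow_eq_sum_stirlingSecond_mul_descFactorial (k p : ℕ) :
    k ^ p = ∑ j ∈ range (p + 1), p.stirlingSecond j * k.descFactorial j := by
  simpa using sum_fun_card_image (α := Fin k) p fun _ ↦ (1 : ℕ)

theorem Nat.choose_mul_descFactorial {n k j : ℕ} (hjk : j ≤ k) :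
    n.choose k * k.descFactorial j = n.descFactorial j * (n - j).choose (k - j) := by
  rw [descFactorial_eq_factorial_mul_choose, descFactorial_eq_factorial_mul_choose,
    mul_left_comm, choose_mul hjk, mul_assoc]

theorem sum_binomial_mul_descFactorial (N j : ℕ) (α : ℝ) :
    ∑ k ∈ range (N + 1), N.choose k * α ^ k * (1 - α) ^ (N - k) * k.descFactorial j =
      N.descFactorial j * α ^ j := by
  rcases lt_or_ge N j with hNj | hjN
  · rw [Nat.descFactorial_eq_zero_iff_lt.2 hNj, Nat.cast_zero, zero_mul]
    refine sum_eq_zero fun k hk ↦ ?_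
    rw [Nat.descFactorial_eq_zero_iff_lt.2 (by grind)]
    simp
  obtain ⟨r, rfl⟩ := Nat.exists_eq_add_of_le hjN
  rw [add_assoc, sum_range_add, sum_eq_zero fun k hk ↦ by
    rw [Nat.descFactorial_eq_zero_iff_lt.2 (mem_range.1 hk)]; simp, zero_add]
  have hterm : ∀ t ∈ range (r + 1), ((j + r).choose (j + t) : ℝ) * α ^ (j + t) *
      (1 - α) ^ (j + r - (j + t)) * (j + t).descFactorial j =
      (j + r).descFactorial j * α ^ j * (r.choose t * α ^ t * (1 - α) ^ (r - t)) := by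
    intro t _
    have h := congrArg (Nat.cast (R := ℝ))
      (Nat.choose_mul_descFactorial (n := j + r) (Nat.le_add_right j t))
    push_cast [Nat.add_sub_cancel_left] at h
    rw [Nat.add_sub_add_left, pow_add]
    linear_combination α ^ j * α ^ t * (1 - α) ^ (r - t) * h
  have hbinom : ∑ t ∈ range (r + 1), (r.choose t : ℝ) * α ^ t * (1 - α) ^ (r - t) = 1 := by
    calc _ = (α + (1 - α)) ^ r := by rw [add_pow]; exact sum_congr rfl fun t _ ↦ by ring
      _ = 1 := by simp
  rw [sum_congr rfl hterm, ← mul_sum, hbinom, mul_one]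

theorem Nat.descFactorial_mul_pow_le_pow_mul_descFactorial {a b : ℕ} (hab : a ≤ b) (j : ℕ) :
    a.descFactorial j * b ^ j ≤ a ^ j * b.descFactorial j := by
  induction j with
  | zero => simp
  | succ j ih =>
    have hstep : (a - j) * b ≤ a * (b - j) := by
      rw [Nat.sub_mul, Nat.mul_sub, mul_comm a j]
      exact Nat.sub_le_sub_left (Nat.mul_le_mul_left j hab) _
    calc a.descFactorial (j + 1) * b ^ (j + 1)
        = (a.descFactorial j * b ^ j) * ((a - j) * b) := by
          rw [descFactorial_succ, pow_succ]; ring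
      _ ≤ (a ^ j * b.descFactorial j) * (a * (b - j)) := Nat.mul_le_mul ih hstep
      _ = a ^ (j + 1) * b.descFactorial (j + 1) := by rw [descFactorial_succ, pow_succ]; ring

theorem pow_le_exp_mul_descFactorial {s j : ℕ} (hjs : j ≤ s) :
    (s : ℝ) ^ j ≤ exp j * s.descFactorial j := by
  have hcomb : (j.factorial : ℝ) * s ^ j ≤ j ^ j * s.descFactorial j := by
    exact_mod_cast Nat.descFactorial_self j ▸
      Nat.descFactorial_mul_pow_le_pow_mul_descFactorial hjs j
  have hexp : (j : ℝ) ^ j / j.factorial ≤ exp j := pow_div_factorial_le_exp _ (Nat.cast_nonneg j) j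
  rw [div_le_iff₀ (by positivity)] at hexp
  have hfac : (0 : ℝ) < j.factorial := by positivity
  nlinarith [Nat.cast_nonneg (α := ℝ) (s.descFactorial j)]

theorem descFactorial_sq_div_le {s m : ℕ} (hsm : s ≤ m) (j : ℕ) :
    (s.descFactorial j : ℝ) ^ 2 / m.descFactorial j ≤ s.descFactorial j * ((s : ℝ) / m) ^ j := by
  rcases (Nat.zero_le (m.descFactorial j)).eq_or_lt with hm | hm
  · rw [← hm, Nat.cast_zero, div_zero]
    positivity
  have hD : (0 : ℝ) < m.descFactorial j := by exact_mod_cast hm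
  have hmj : (0 : ℝ) < (m : ℝ) ^ j := hD.trans_le (by exact_mod_cast Nat.descFactorial_le_pow m j)
  have hcomp : (s.descFactorial j : ℝ) * m ^ j ≤ s ^ j * m.descFactorial j := by
    exact_mod_cast Nat.descFactorial_mul_pow_le_pow_mul_descFactorial hsm j
  rw [div_pow, div_le_iff₀ hD, mul_div_assoc', div_mul_eq_mul_div, le_div_iff₀ hmj]
  nlinarith [Nat.cast_nonneg (α := ℝ) (s.descFactorial j)]

theorem exp_neg_mul_le_descFactorial_sq_div {s m : ℕ} (hsm : s ≤ m) (j : ℕ) :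
    exp (-j) * (s.descFactorial j * ((s : ℝ) / m) ^ j) ≤
      (s.descFactorial j : ℝ) ^ 2 / m.descFactorial j := by
  rcases lt_or_ge s j with hsj | hjs
  · simp [Nat.descFactorial_eq_zero_iff_lt.2 hsj]
  have hD : (0 : ℝ) < m.descFactorial j := by
    exact_mod_cast Nat.descFactorial_pos.2 (hjs.trans hsm)
  have hmj : (m.descFactorial j : ℝ) ≤ (m : ℝ) ^ j := by exact_mod_cast Nat.descFactorial_le_pow m j
  have hsj : exp (-j) * (s : ℝ) ^ j ≤ s.descFactorial j := by
    rw [exp_neg, inv_mul_le_iff₀ (exp_pos _)]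
    exact pow_le_exp_mul_descFactorial hjs
  have hratio : (m.descFactorial j : ℝ) / (m : ℝ) ^ j ≤ 1 := div_le_one_of_le₀ hmj (by positivity)
  rw [div_pow, le_div_iff₀ hD]
  calc exp (-j) * (s.descFactorial j * ((s : ℝ) ^ j / (m : ℝ) ^ j)) * m.descFactorial j
      = s.descFactorial j * (exp (-j) * (s : ℝ) ^ j) * (m.descFactorial j / (m : ℝ) ^ j) := by
        ring
    _ ≤ s.descFactorial j * s.descFactorial j * 1 := by gcongr
    _ = (s.descFactorial j : ℝ) ^ 2 := by ring

section DiscreteRandomVariable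

variable {Ω β : Type*} [MeasurableSpace Ω] {μ : Measure Ω} {Y : Ω → β} {T : Finset β}

theorem ae_mem_of_sum_measure_preimage_eq_one [IsProbabilityMeasure μ]
    (hY : ∀ t ∈ T, MeasurableSet (Y ⁻¹' {t})) (hsum : ∑ t ∈ T, μ (Y ⁻¹' {t}) = 1) :
    ∀ᵐ ω ∂μ, Y ω ∈ T := by
  have hset : {ω | Y ω ∈ T} = ⋃ t ∈ T, Y ⁻¹' {t} := by ext; simp
  have hdisj : (T : Set β).PairwiseDisjoint fun t ↦ Y ⁻¹' {t} :=
    fun _ _ _ _ hst ↦ Set.disjoint_iff.2 fun _ h ↦ hst (h.1.symm.trans h.2)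
  have hmeas : MeasurableSet {ω | Y ω ∈ T} := hset ▸ Finset.measurableSet_biUnion T hY
  rw [ae_iff_measure_eq hmeas.nullMeasurableSet, hset, measure_biUnion_finset hdisj hY, hsum,
    measure_univ]

theorem integral_comp_eq_sum_of_ae_mem [IsFiniteMeasure μ]
    (hY : ∀ t ∈ T, MeasurableSet (Y ⁻¹' {t})) (hT : ∀ᵐ ω ∂μ, Y ω ∈ T) (f : β → ℝ) :
    ∫ ω, f (Y ω) ∂μ = ∑ t ∈ T, μ.real (Y ⁻¹' {t}) * f t := by
  classical
  have hae : (fun ω ↦ f (Y ω)) =ᵐ[μ] fun ω ↦ ∑ t ∈ T, (Y ⁻¹' {t}).indicator (fun _ ↦ f t) ω := by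
    filter_upwards [hT] with ω hω
    simp [Set.indicator_apply, eq_comm (a := Y ω), hω]
  rw [integral_congr_ae hae,
    integral_finsetSum _ fun t ht ↦ (integrable_const _).indicator (hY t ht)]
  exact sum_congr rfl fun t ht ↦ by rw [integral_indicator_const _ (hY t ht), smul_eq_mul]

end DiscreteRandomVariable

section Binomial

variable {Ω : Type*} [MeasureSpace Ω] {X : Ω → ℝ} {N : ℕ} {α : ℝ}

theorem HasBinomialDist.measureReal_eq (hX : HasBinomialDist X N α) (hα0 : 0 ≤ α) (hα1 : α ≤ 1)
    (k : ℕ) : (ℙ : Measure Ω).real (X ⁻¹' {(k : ℝ)}) = N.choose k * α ^ k * (1 - α) ^ (N - k) := by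
  have h1 : 0 ≤ 1 - α := sub_nonneg.2 hα1
  rw [measureReal_def, show X ⁻¹' {(k : ℝ)} = {ω | X ω = k} from rfl, hX k,
    ENNReal.toReal_ofReal (by positivity)]

variable [IsProbabilityMeasure (ℙ : Measure Ω)]

theorem HasBinomialDist.integral_comp (hX : HasBinomialDist X N α) (hXm : Measurable X)
    (hα0 : 0 ≤ α) (hα1 : α ≤ 1) (f : ℝ → ℝ) :
    ∫ ω, f (X ω) = ∑ k ∈ range (N + 1), N.choose k * α ^ k * (1 - α) ^ (N - k) * f k := by
  have hmeas : ∀ t ∈ (range (N + 1)).image (Nat.cast : ℕ → ℝ), MeasurableSet (X ⁻¹' {t}) :=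
    fun t _ ↦ hXm (measurableSet_singleton t)
  have hsum : ∑ t ∈ (range (N + 1)).image (Nat.cast : ℕ → ℝ), ℙ (X ⁻¹' {t}) = 1 := by
    rw [sum_image fun _ _ _ _ h ↦ Nat.cast_injective h]
    have hb (k : ℕ) : 0 ≤ (N.choose k : ℝ) * α ^ k * (1 - α) ^ (N - k) := by
      have := sub_nonneg.2 hα1; positivity
    simp only [Set.preimage, Set.mem_singleton_iff]
    rw [sum_congr rfl fun k _ ↦ hX k, ← ENNReal.ofReal_sum_of_nonneg fun k _ ↦ hb k]
    simpa using sum_binomial_mul_descFactorial N 0 α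
  rw [integral_comp_eq_sum_of_ae_mem hmeas (ae_mem_of_sum_measure_preimage_eq_one hmeas hsum),
    sum_image fun _ _ _ _ h ↦ Nat.cast_injective h]
  exact sum_congr rfl fun k _ ↦ by rw [hX.measureReal_eq hα0 hα1]

theorem HasBinomialDist.integral_abs_pow (hX : HasBinomialDist X N α) (hXm : Measurable X)
    (hα0 : 0 ≤ α) (hα1 : α ≤ 1) (p : ℕ) :
    ∫ ω, |X ω| ^ p = ∑ j ∈ range (p + 1), p.stirlingSecond j * (N.descFactorial j * α ^ j) := by
  have hpow (k : ℕ) :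
      |(k : ℝ)| ^ p = ∑ j ∈ range (p + 1), (p.stirlingSecond j * k.descFactorial j : ℝ) := by
    rw [Nat.abs_cast]; exact_mod_cast Nat.pow_eq_sum_stirlingSecond_mul_descFactorial k p
  simp only [hX.integral_comp hXm hα0 hα1 fun x ↦ |x| ^ p, hpow, mul_sum]
  rw [sum_comm]
  refine sum_congr rfl fun j _ ↦ ?_
  rw [← sum_binomial_mul_descFactorial, mul_sum]
  exact sum_congr rfl fun k _ ↦ by ring

end Binomial

theorem prod_comp_eq_prod_image_of_isIdempotentElem {ι κ M : Type*} [Fintype ι] [DecidableEq κ]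
    [CommMonoid M] {a : κ → M} (ha : ∀ r, IsIdempotentElem (a r)) (f : ι → κ) :
    ∏ t, a (f t) = ∏ r ∈ univ.image f, a r := by
  rw [prod_comp]
  refine prod_congr rfl fun r hr ↦ (ha r).pow_eq ?_
  obtain ⟨t, -, rfl⟩ := mem_image.1 hr
  exact (card_pos.2 ⟨t, by simp⟩).ne'

theorem sum_pow_eq_sum_prod_image_of_isIdempotentElem {κ R : Type*} [Fintype κ] [DecidableEq κ]
    [CommSemiring R] {a : κ → R} (ha : ∀ r, IsIdempotentElem (a r)) (p : ℕ) :
    (∑ r, a r) ^ p = ∑ f : Fin p → κ, ∏ r ∈ univ.image f, a r := by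
  rw [sum_pow', Fintype.piFinset_univ]
  exact sum_congr rfl fun f _ ↦ prod_comp_eq_prod_image_of_isIdempotentElem ha f

namespace UnifSSCJL

variable {Ω : Type} [MeasureSpace Ω] {n m s : ℕ} (c : UnifSSCJL Ω n m s)

noncomputable def support (i : Fin n) (ω : Ω) : Finset (Fin m) := {r | c.η r i ω = 1}

theorem preimage_support_singleton (i : Fin n) (S : Finset (Fin m)) :
    c.support i ⁻¹' {S} = {ω | ∀ r, c.η r i ω = 1 ↔ r ∈ S} := by
  ext ω
  simp [support, Finset.ext_iff, iff_comm]

theorem measurableSet_preimage_support (i : Fin n) (S : Finset (Fin m)) :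
    MeasurableSet (c.support i ⁻¹' {S}) := by
  rw [preimage_support_singleton, Set.ofPred_forall]
  refine MeasurableSet.iInter fun r ↦ ?_
  have h1 : MeasurableSet {ω | c.η r i ω = 1} := c.meas_eta r i (measurableSet_singleton 1)
  by_cases hr : r ∈ S
  · simp only [hr, iff_true]
    exact h1
  · simp only [hr, iff_false]
    exact h1.compl

theorem prod_eta_eq_ite (R : Finset (Fin m)) (i : Fin n) (ω : Ω) :
    ∏ r ∈ R, c.η r i ω = if R ⊆ c.support i ω then 1 else 0 := by
  split_ifs with hR
  · exact prod_eq_one fun r hr ↦ by simpa [support] using hR hr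
  · obtain ⟨r, hrR, hr⟩ := not_subset.1 hR
    exact prod_eq_zero hrR ((c.eta01 r i ω).resolve_right (by simpa [support] using hr))

theorem measurable_prod_eta (R : Finset (Fin m)) (i : Fin n) :
    Measurable fun ω ↦ ∏ r ∈ R, c.η r i ω :=
  Finset.measurable_prod R fun r _ ↦ c.meas_eta r i

theorem isIdempotentElem_eta (r : Fin m) (i : Fin n) (ω : Ω) : IsIdempotentElem (c.η r i ω) := by
  rcases c.eta01 r i ω with h | h <;> simp [h, IsIdempotentElem]

theorem Q_pow_eq_sum (i j : Fin n) (p : ℕ) (ω : Ω) :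
    c.Q i j ω ^ p =
      ∑ f : Fin p → Fin m, (∏ r ∈ univ.image f, c.η r i ω) * ∏ r ∈ univ.image f, c.η r j ω := by
  rw [Q, sum_pow_eq_sum_prod_image_of_isIdempotentElem fun r ↦
    (c.isIdempotentElem_eta r i ω).mul (c.isIdempotentElem_eta r j ω)]
  simp_rw [prod_mul_distrib]

theorem Q_nonneg (i j : Fin n) (ω : Ω) : 0 ≤ c.Q i j ω :=
  sum_nonneg fun r _ ↦ by
    rcases c.eta01 r i ω with h | h <;> rcases c.eta01 r j ω with h' | h' <;> simp [h, h']

variable [IsProbabilityMeasure (ℙ : Measure Ω)]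

theorem ae_support_mem_powersetCard (hsm : s ≤ m) (i : Fin n) :
    ∀ᵐ ω, c.support i ω ∈ powersetCard s univ := by
  refine ae_mem_of_sum_measure_preimage_eq_one (fun S _ ↦ c.measurableSet_preimage_support i S) ?_
  rw [sum_congr rfl fun S hS ↦ by
      rw [preimage_support_singleton, c.unif i S (mem_powersetCard.1 hS).2],
    sum_const, card_powersetCard, card_univ, Fintype.card_fin, nsmul_eq_mul]
  exact ENNReal.mul_inv_cancel (by exact_mod_cast (Nat.choose_pos hsm).ne')
    (ENNReal.natCast_ne_top _)

theorem integral_comp_support (hsm : s ≤ m) (i : Fin n) (f : Finset (Fin m) → ℝ) :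
    ∫ ω, f (c.support i ω) = (∑ S ∈ powersetCard s univ, f S) / m.choose s := by
  rw [integral_comp_eq_sum_of_ae_mem (fun S _ ↦ c.measurableSet_preimage_support i S)
    (c.ae_support_mem_powersetCard hsm i), sum_div]
  refine sum_congr rfl fun S hS ↦ ?_
  rw [measureReal_def, preimage_support_singleton, c.unif i S (mem_powersetCard.1 hS).2,
    ENNReal.toReal_inv, ENNReal.toReal_natCast]
  ring

theorem integral_prod_eta (hsm : s ≤ m) (i : Fin n) (R : Finset (Fin m)) :
    ∫ ω, ∏ r ∈ R, c.η r i ω = s.descFactorial #R / m.descFactorial #R := by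
  simp_rw [c.prod_eta_eq_ite]
  rw [c.integral_comp_support hsm i fun S ↦ if R ⊆ S then 1 else 0, sum_boole]
  rcases le_or_gt #R s with hRs | hRs
  · have hcount := card_filter_powersetCard_subset R univ s (subset_univ R) hRs
    have hid := Nat.choose_mul_descFactorial (n := m) hRs
    rw [card_univ, Fintype.card_fin] at hcount
    rw [hcount, div_eq_div_iff (by exact_mod_cast (Nat.choose_pos hsm).ne')
      (by exact_mod_cast (Nat.descFactorial_pos.2 (hRs.trans hsm)).ne')]
    exact_mod_cast by rw [mul_comm, ← hid]; ring
  · have hempty : (powersetCard s univ).filter (R ⊆ ·) = ∅ :=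
      filter_eq_empty_iff.2 fun S hS hRS ↦ (card_le_card hRS).not_gt
        ((mem_powersetCard.1 hS).2 ▸ hRs)
    simp [hempty, Nat.descFactorial_eq_zero_iff_lt.2 hRs]

theorem integrable_prod_eta_mul_prod_eta (R : Finset (Fin m)) (i j : Fin n) :
    Integrable fun ω ↦ (∏ r ∈ R, c.η r i ω) * ∏ r ∈ R, c.η r j ω := by
  refine .of_bound
    ((c.measurable_prod_eta R i).mul (c.measurable_prod_eta R j)).aestronglyMeasurable 1
    (.of_forall fun ω ↦ ?_)
  rw [c.prod_eta_eq_ite, c.prod_eta_eq_ite]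
  split_ifs <;> simp

theorem integral_prod_eta_mul_prod_eta {i j : Fin n} (hij : i ≠ j) (hsm : s ≤ m)
    (R : Finset (Fin m)) :
    ∫ ω, (∏ r ∈ R, c.η r i ω) * ∏ r ∈ R, c.η r j ω =
      ((s.descFactorial #R : ℝ) / m.descFactorial #R) ^ 2 := by
  have hF : Measurable fun v : Fin m → ℝ ↦ ∏ r ∈ R, v r :=
    Finset.measurable_prod R fun r _ ↦ measurable_pi_apply r
  have hind := (c.cols_indep.indepFun hij).comp hF hF
  calc _ = (∫ ω, ∏ r ∈ R, c.η r i ω) * ∫ ω, ∏ r ∈ R, c.η r j ω :=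
        hind.integral_fun_mul_eq_mul_integral (c.measurable_prod_eta R i).aestronglyMeasurable
          (c.measurable_prod_eta R j).aestronglyMeasurable
    _ = _ := by rw [c.integral_prod_eta hsm, c.integral_prod_eta hsm, sq]

theorem integral_Q_pow {i j : Fin n} (hij : i ≠ j) (hsm : s ≤ m) (p : ℕ) :
    ∫ ω, c.Q i j ω ^ p =
      ∑ k ∈ range (p + 1),
        p.stirlingSecond k * ((s.descFactorial k : ℝ) ^ 2 / m.descFactorial k) := by
  simp_rw [c.Q_pow_eq_sum]
  rw [integral_finsetSum _ fun f _ ↦ c.integrable_prod_eta_mul_prod_eta _ i j,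
    sum_congr rfl fun f _ ↦ c.integral_prod_eta_mul_prod_eta hij hsm _,
    sum_fun_card_image p fun k ↦ ((s.descFactorial k : ℝ) / m.descFactorial k) ^ 2,
    Fintype.card_fin]
  refine sum_congr rfl fun k _ ↦ ?_
  rcases eq_or_ne (m.descFactorial k : ℝ) 0 with h | h
  · simp [h]
  · field_simp

end UnifSSCJL

theorem pnorm_natCast {Ω : Type*} [MeasureSpace Ω] (Y : Ω → ℝ) (p : ℕ) :
    pnorm Y p = (∫ ω, |Y ω| ^ p) ^ (1 / (p : ℝ)) := by
  simp only [pnorm, Real.rpow_natCast]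

theorem mul_rpow_one_div_le_of_pow_mul_le {a b c : ℝ} {p : ℕ} (ha : 0 ≤ a) (hc : 0 ≤ c)
    (hp : p ≠ 0) (h : c ^ p * a ≤ b) : c * a ^ (1 / (p : ℝ)) ≤ b ^ (1 / (p : ℝ)) := by
  calc c * a ^ (1 / (p : ℝ)) = (c ^ p * a) ^ (1 / (p : ℝ)) := by
        rw [mul_rpow (by positivity) ha, one_div, pow_rpow_inv_natCast hc hp]
    _ ≤ b ^ (1 / (p : ℝ)) := by gcongr

theorem Q12_moment_comparable_to_binomial :
    ∃ c₁ c₂ : ℝ, 0 < c₁ ∧ 0 < c₂ ∧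
      ∀ (Ω : Type) [MeasureSpace Ω] [IsProbabilityMeasure (ℙ : Measure Ω)]
        (n m s : ℕ) (hn : 2 ≤ n), 0 < s → s ≤ m →
        ∀ (c : UnifSSCJL Ω n m s) (p : ℕ), 1 ≤ p → p < s →
        ∀ (Ω' : Type) [MeasureSpace Ω'] [IsProbabilityMeasure (ℙ : Measure Ω')]
          (X : Ω' → ℝ), Measurable X → HasBinomialDist X s ((s : ℝ) / m) →
          c₁ * pnorm X p ≤ pnorm (c.Q ⟨0, by omega⟩ ⟨1, by omega⟩) p ∧
            pnorm (c.Q ⟨0, by omega⟩ ⟨1, by omega⟩) p ≤ c₂ * pnorm X p := by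
  refine ⟨exp (-1), 1, exp_pos _, one_pos, ?_⟩
  intro Ω _ _ n m s hn _ hsm c p hp _ Ω' _ _ X hXm hX
  have hα1 : (s : ℝ) / m ≤ 1 := div_le_one_of_le₀ (by exact_mod_cast hsm) (by positivity)
  have hEQ := c.integral_Q_pow (i := ⟨0, by omega⟩) (j := ⟨1, by omega⟩) (by simp) hsm p
  have hEX := hX.integral_abs_pow hXm (by positivity) hα1 p
  simp only [pnorm_natCast, abs_of_nonneg (c.Q_nonneg _ _ _), hEQ, hEX, one_mul]
  constructor
  · refine mul_rpow_one_div_le_of_pow_mul_le (by positivity) (exp_pos _).le (by omega) ?_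
    rw [mul_sum]
    refine sum_le_sum fun j hj ↦ ?_
    have hjp : exp (-1) ^ p ≤ exp (-j) := by
      rw [← exp_nat_mul, mul_neg_one, exp_le_exp, neg_le_neg_iff]
      exact_mod_cast mem_range_succ_iff.1 hj
    calc exp (-1) ^ p * (p.stirlingSecond j * (s.descFactorial j * ((s : ℝ) / m) ^ j))
        ≤ p.stirlingSecond j * (exp (-j) * (s.descFactorial j * ((s : ℝ) / m) ^ j)) := by
          rw [mul_left_comm]; gcongr
      _ ≤ _ := by gcongr; exact exp_neg_mul_le_descFactorial_sq_div hsm j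
  · gcongr with j
    exact descFactorial_sq_div_le hsm j
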